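/- A sequent is valid if and only if some subsequent of it is derivable in Mp. -/

import Mathlib

/-- Propositional formulas in negation normal form. -/
inductive Fm : Type
  | pos : ℕ → Fm
  | neg : ℕ → Fm
  | conj : Fm → Fm → Fm
  | disj : Fm → Fm → Fm
  deriving DecidableEq

/-- Boolean evaluation of a formula under a valuation. -/
def Fm.eval (v : ℕ → Bool) : Fm → Bool
  | .pos p => v p
  | .neg p => !(v p)
  | .conj a b => a.eval v && b.eval v
  | .disj a b => a.eval v || b.eval v

/-- A sequent (nonempty multiset of formulas) is valid if under every
valuation some member is true (i.e. the disjunction is a tautology). -/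
def Valid (Γ : Multiset Fm) : Prop :=
  Γ ≠ 0 ∧ ∀ v : ℕ → Bool, ∃ A ∈ Γ, Fm.eval v A = true

/-- A sequent is minimal if it is valid and no proper sub-multiset is valid. -/
def MinimalSeq (Γ : Multiset Fm) : Prop :=
  Valid Γ ∧ ∀ Δ : Multiset Fm, Δ < Γ → ¬ Valid Δ

/-- Derivability in minimal sequent calculus Mp. -/
inductive Mp : Multiset Fm → Prop
  | ax (P : ℕ) : Mp {Fm.pos P, Fm.neg P}
  | blend {Γ Δ S : Multiset Fm} {A B : Fm} :
      Mp (Γ + Δ + {A}) → Mp (Γ + S + {B}) → Mp (Γ + Δ + S + {Fm.conj A B})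
  | par {Γ : Multiset Fm} {A B : Fm} :
      Mp (Γ + {A, B}) → Mp (Γ + {Fm.disj A B})
  | plus1 {Γ : Multiset Fm} {A B : Fm} :
      Mp (Γ + {A}) → Mp (Γ + {Fm.disj A B})
  | plus2 {Γ : Multiset Fm} {A B : Fm} :
      Mp (Γ + {B}) → Mp (Γ + {Fm.disj A B})

/-! Soundness is a routine induction on derivations. For completeness, validity is invertible
for both connectives: `Γ, A ∧ B` is valid iff `Γ, A` and `Γ, B` are, and `Γ, A ∨ B` is valid iff
`Γ, A, B` is. Decomposing a compound formula lowers the size of the sequent, and a valid sequent of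
literals contains a complementary pair. Asking only for a derivable *subsequent* absorbs
weakening: a derivation of a subsequent of a premise that avoids the active formula is already one
for the conclusion, and derivations of `S₁, A` and `S₂, B` blend over their common part `S₁ ∩ S₂`
into a derivation of `S₁ ∪ S₂, A ∧ B`. -/

namespace Multiset

variable {α : Type*} [DecidableEq α]

theorem le_add_singleton_cases {s t : Multiset α} {a : α} (h : s ≤ t + {a}) :
    s ≤ t ∨ ∃ u ≤ t, s = u + {a} := by
  rw [add_comm, singleton_add] at h
  by_cases ha : a ∈ s
  · exact .inr ⟨s.erase a, erase_le_iff_le_cons.2 h, (add_singleton_eq_iff.2 ⟨ha, rfl⟩).symm⟩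
  · exact .inl ((le_cons_of_notMem ha).1 h)

theorem inter_add_sub_add_sub (s t : Multiset α) : s ∩ t + (s - t) + (t - s) = s ∪ t := by
  ext a
  simp only [count_add, count_sub, count_inter, count_union]
  omega

end Multiset

def Holds (v : ℕ → Bool) (Γ : Multiset Fm) : Prop :=
  ∃ A ∈ Γ, A.eval v = true

theorem holds_add {v : ℕ → Bool} {Γ Δ : Multiset Fm} :
    Holds v (Γ + Δ) ↔ Holds v Γ ∨ Holds v Δ := by
  simp only [Holds, Multiset.mem_add, or_and_right, exists_or]

theorem holds_singleton {v : ℕ → Bool} {A : Fm} : Holds v {A} ↔ A.eval v = true := by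
  simp [Holds]

theorem valid_iff_forall_holds {Γ : Multiset Fm} : Valid Γ ↔ Γ ≠ 0 ∧ ∀ v, Holds v Γ :=
  Iff.rfl

theorem valid_add_singleton_iff {Γ : Multiset Fm} {A : Fm} :
    Valid (Γ + {A}) ↔ ∀ v, Holds v Γ ∨ A.eval v = true := by
  simp [valid_iff_forall_holds, holds_add, holds_singleton]

theorem valid_add_conj_iff {Γ : Multiset Fm} {A B : Fm} :
    Valid (Γ + {.conj A B}) ↔ Valid (Γ + {A}) ∧ Valid (Γ + {B}) := by
  simp only [valid_add_singleton_iff, Fm.eval, Bool.and_eq_true, or_and_left, forall_and]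

theorem valid_add_disj_iff {Γ : Multiset Fm} {A B : Fm} :
    Valid (Γ + {.disj A B}) ↔ Valid (Γ + {A, B}) := by
  rw [Multiset.insert_eq_cons, ← Multiset.singleton_add, ← add_assoc]
  simp only [valid_add_singleton_iff, holds_add, holds_singleton, Fm.eval, Bool.or_eq_true,
    or_assoc]

theorem Valid.mono {Δ Γ : Multiset Fm} (h : Valid Δ) (hle : Δ ≤ Γ) : Valid Γ :=
  ⟨ne_bot_of_le_ne_bot h.1 hle, fun v =>
    (h.2 v).imp fun _ ⟨hA, hv⟩ => ⟨Multiset.mem_of_le hle hA, hv⟩⟩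

theorem Mp.valid {Γ : Multiset Fm} (h : Mp Γ) : Valid Γ := by
  induction h with
  | ax P =>
    refine ⟨by simp, fun v => ?_⟩
    cases hv : v P
    · exact ⟨.neg P, by simp, by simp [Fm.eval, hv]⟩
    · exact ⟨.pos P, by simp, by simp [Fm.eval, hv]⟩
  | blend _ _ ih₁ ih₂ =>
    simp only [valid_add_singleton_iff, holds_add, Fm.eval, Bool.and_eq_true] at ih₁ ih₂ ⊢
    intro v
    have hv₁ := ih₁ v
    have hv₂ := ih₂ v
    tauto
  | par _ ih => exact valid_add_disj_iff.2 ih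
  | plus1 _ ih =>
    simp only [valid_add_singleton_iff, Fm.eval, Bool.or_eq_true] at ih ⊢
    exact fun v => (ih v).imp_right .inl
  | plus2 _ ih =>
    simp only [valid_add_singleton_iff, Fm.eval, Bool.or_eq_true] at ih ⊢
    exact fun v => (ih v).imp_right .inr

def SubDerivable (Γ : Multiset Fm) : Prop :=
  ∃ Δ : Multiset Fm, Δ ≤ Γ ∧ Mp Δ

namespace SubDerivable

theorem mono {Δ Γ : Multiset Fm} (h : SubDerivable Δ) (hle : Δ ≤ Γ) : SubDerivable Γ :=
  let ⟨Θ, hΘ, hMp⟩ := h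
  ⟨Θ, hΘ.trans hle, hMp⟩

theorem of_mem_pos_of_mem_neg {Γ : Multiset Fm} {p : ℕ} (hpos : .pos p ∈ Γ)
    (hneg : .neg p ∈ Γ) : SubDerivable Γ :=
  ⟨{.pos p, .neg p}, (Multiset.le_iff_subset (by simp)).2 (by simp [hpos, hneg]), Mp.ax p⟩

theorem add_singleton_of_le {Δ Γ : Multiset Fm} (A : Fm) (h : Mp (Δ + {A})) (hle : Δ ≤ Γ) :
    SubDerivable (Γ + {A}) :=
  ⟨Δ + {A}, add_le_add_left hle _, h⟩

theorem add_conj {Γ : Multiset Fm} {A B : Fm} (hA : SubDerivable (Γ + {A}))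
    (hB : SubDerivable (Γ + {B})) : SubDerivable (Γ + {.conj A B}) := by
  obtain ⟨ΔA, hΔA, hA⟩ := hA
  obtain ⟨ΔB, hΔB, hB⟩ := hB
  rcases Multiset.le_add_singleton_cases hΔA with hΔA | ⟨SA, hSA, rfl⟩
  · exact mono ⟨ΔA, hΔA, hA⟩ le_self_add
  rcases Multiset.le_add_singleton_cases hΔB with hΔB | ⟨SB, hSB, rfl⟩
  · exact mono ⟨ΔB, hΔB, hB⟩ le_self_add
  have hblend := Mp.blend (Γ := SA ∩ SB) (Δ := SA - SB) (S := SB - SA) (A := A) (B := B)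
    (by rwa [add_comm (SA ∩ SB), Multiset.sub_add_inter])
    (by rwa [Multiset.inter_comm, add_comm (SB ∩ SA), Multiset.sub_add_inter])
  rw [Multiset.inter_add_sub_add_sub] at hblend
  exact add_singleton_of_le _ hblend (sup_le hSA hSB)

theorem add_disj {Γ : Multiset Fm} {A B : Fm} (h : SubDerivable (Γ + {A, B})) :
    SubDerivable (Γ + {.disj A B}) := by
  obtain ⟨Δ, hΔ, hMp⟩ := h
  rw [Multiset.insert_eq_cons, ← Multiset.singleton_add, ← add_assoc] at hΔ
  rcases Multiset.le_add_singleton_cases hΔ with hΔ | ⟨T, hT, rfl⟩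
  · rcases Multiset.le_add_singleton_cases hΔ with hΔ | ⟨T, hT, rfl⟩
    · exact mono ⟨Δ, hΔ, hMp⟩ le_self_add
    · exact add_singleton_of_le _ (Mp.plus1 hMp) hT
  · rcases Multiset.le_add_singleton_cases hT with hT | ⟨U, hU, rfl⟩
    · exact add_singleton_of_le _ (Mp.plus2 hMp) hT
    · refine add_singleton_of_le _ (Mp.par ?_) hU
      rwa [Multiset.insert_eq_cons, ← Multiset.singleton_add, ← add_assoc]

theorem of_valid_of_literals {Γ : Multiset Fm} (h : Valid Γ)
    (hconj : ∀ A B, .conj A B ∉ Γ) (hdisj : ∀ A B, .disj A B ∉ Γ) : SubDerivable Γ := by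
  -- this valuation falsifies every negative literal of `Γ`
  obtain ⟨C, hC, hCv⟩ := h.2 fun p => decide (.neg p ∈ Γ)
  cases C with
  | pos p => exact of_mem_pos_of_mem_neg hC (by simpa [Fm.eval] using hCv)
  | neg p => simp [Fm.eval, hC] at hCv
  | conj A B => exact absurd hC (hconj A B)
  | disj A B => exact absurd hC (hdisj A B)

end SubDerivable

theorem Valid.subDerivable {Γ : Multiset Fm} (h : Valid Γ) : SubDerivable Γ := by
  by_cases hconj : ∃ A B, .conj A B ∈ Γ
  · obtain ⟨A, B, hmem⟩ := hconj
    obtain ⟨Γ', hΓ⟩ : ∃ Γ', Γ = Γ' + {.conj A B} :=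
      ⟨_, (Multiset.add_singleton_eq_iff.2 ⟨hmem, rfl⟩).symm⟩
    obtain ⟨hA, hB⟩ := valid_add_conj_iff.1 (hΓ ▸ h)
    exact hΓ ▸ .add_conj hA.subDerivable hB.subDerivable
  by_cases hdisj : ∃ A B, .disj A B ∈ Γ
  · obtain ⟨A, B, hmem⟩ := hdisj
    obtain ⟨Γ', hΓ⟩ : ∃ Γ', Γ = Γ' + {.disj A B} :=
      ⟨_, (Multiset.add_singleton_eq_iff.2 ⟨hmem, rfl⟩).symm⟩
    exact hΓ ▸ .add_disj (valid_add_disj_iff.1 (hΓ ▸ h)).subDerivable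
  push Not at hconj hdisj
  exact .of_valid_of_literals h hconj hdisj
termination_by (Γ.map sizeOf).sum
decreasing_by
  all_goals
    subst hΓ
    simp only [Multiset.map_add, Multiset.sum_add, Multiset.map_singleton,
      Multiset.sum_singleton, Multiset.insert_eq_cons, Multiset.map_cons, Multiset.sum_cons,
      Fm.conj.sizeOf_spec, Fm.disj.sizeOf_spec]
    omega

theorem stmt_9_general (Γ : Multiset Fm) :
    Valid Γ ↔ ∃ Δ : Multiset Fm, Δ ≤ Γ ∧ Mp Δ :=
  ⟨Valid.subDerivable, fun ⟨_, hle, hMp⟩ => hMp.valid.mono hle⟩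

theorem stmt_9 (Γ : Multiset Fm) (hne : Γ ≠ 0) :
    Valid Γ ↔ ∃ Δ : Multiset Fm, Δ ≤ Γ ∧ Mp Δ :=
  stmt_9_general Γ
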